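/- For every M > 0 there exist a constant coefficient a ≥ M and a function h : ℝ → ℝ with h(t) < t for all t, such that the equation x(t+1) - x(t) + a·x(h(t)) = 0 has a positive solution. Concretely, choose k ∈ ℕ with 2^k ≥ M, set a = 2^k and h(t) = ⌊t⌋ - 2^(-k-2)·(1 - {t}); then x(t) = 2^(-⌊t⌋)·(1 - {t}) is a positive solution (positive for t not an integer, nonnegative everywhere, and solves the equation wherever defined). -/

import Mathlib

/-!
Write `m = ⌊t⌋`, `f = {t}` and `δ = ε (1 - f)` with `ε = 2^(-k-2)`. Since `0 < δ ≤ 1`, the delayed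
argument `h t = m - δ` lies in `[m - 1, m)`, with fractional part `1 - δ`. For the sawtooth
`x t = 2^(-⌊t⌋) (1 - {t})` this gives `x (t + 1) = x t / 2` and `x (h t) = 2^(-m+1) δ = 2 ε x t`,
so the equation reduces to `-1/2 + 2 a ε = 0`, i.e. to `a ε = 1/4`, which holds for `a = 2^k`.
-/

section FloorRing

variable {R : Type*} [Ring R] [LinearOrder R] [IsStrictOrderedRing R] [FloorRing R]

theorem Int.floor_intCast_sub_of_mem_Ioc {n : ℤ} {δ : R} (hδ : δ ∈ Set.Ioc 0 1) :
    ⌊(n : R) - δ⌋ = n - 1 := by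
  rw [Int.floor_eq_iff, Int.cast_sub, Int.cast_one, sub_add_cancel]
  exact ⟨sub_le_sub_left hδ.2 _, sub_lt_self _ hδ.1⟩

theorem Int.fract_intCast_sub_of_mem_Ioc {n : ℤ} {δ : R} (hδ : δ ∈ Set.Ioc 0 1) :
    Int.fract ((n : R) - δ) = 1 - δ := by
  rw [Int.fract, Int.floor_intCast_sub_of_mem_Ioc hδ, Int.cast_sub, Int.cast_one]
  abel

end FloorRing

noncomputable section

def delayedArg (ε t : ℝ) : ℝ := ⌊t⌋ - ε * (1 - Int.fract t)

def sawtooth (q t : ℝ) : ℝ := q ^ (-⌊t⌋) * (1 - Int.fract t)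

theorem delayedArg_lt {ε : ℝ} (hε : 0 < ε) (t : ℝ) : delayedArg ε t < t := by
  have hδ : 0 < ε * (1 - Int.fract t) := mul_pos hε (by linarith [Int.fract_lt_one t])
  unfold delayedArg
  linarith [Int.floor_le t]

theorem mul_one_sub_fract_mem_Ioc {ε : ℝ} (hε : ε ∈ Set.Ioc 0 1) (t : ℝ) :
    ε * (1 - Int.fract t) ∈ Set.Ioc 0 1 := by
  have hf0 := Int.fract_nonneg t
  have hf1 := Int.fract_lt_one t
  constructor
  · exact mul_pos hε.1 (by linarith)
  · nlinarith [hε.1, hε.2]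

theorem sawtooth_pos {q : ℝ} (hq : 0 < q) (t : ℝ) : 0 < sawtooth q t :=
  mul_pos (zpow_pos hq _) (by linarith [Int.fract_lt_one t])

theorem sawtooth_add_one {q : ℝ} (hq : q ≠ 0) (t : ℝ) :
    sawtooth q (t + 1) = q⁻¹ * sawtooth q t := by
  simp only [sawtooth, Int.floor_add_one, Int.fract_add_one, neg_add, zpow_add₀ hq, zpow_neg_one]
  ring

theorem sawtooth_delayedArg {q ε : ℝ} (hq : q ≠ 0) (hε : ε ∈ Set.Ioc 0 1) (t : ℝ) :
    sawtooth q (delayedArg ε t) = q * ε * sawtooth q t := by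
  have hδ := mul_one_sub_fract_mem_Ioc hε t
  rw [sawtooth, sawtooth, delayedArg, Int.floor_intCast_sub_of_mem_Ioc hδ,
    Int.fract_intCast_sub_of_mem_Ioc hδ, neg_sub, sub_eq_add_neg, zpow_add₀ hq, zpow_one]
  ring

theorem sawtooth_solves {q ε a : ℝ} (hq : q ≠ 0) (hε : ε ∈ Set.Ioc 0 1)
    (ha : a * q * ε = 1 - q⁻¹) (t : ℝ) :
    sawtooth q (t + 1) - sawtooth q t + a * sawtooth q (delayedArg ε t) = 0 := by
  rw [sawtooth_add_one hq, sawtooth_delayedArg hq hε]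
  linear_combination sawtooth q t * ha

end

theorem stmt_1_general (M : ℝ) :
    ∃ (a : ℝ) (h x : ℝ → ℝ),
      M ≤ a ∧ (∀ t : ℝ, h t < t) ∧
      (∀ t : ℝ, 0 ≤ x t) ∧
      (∀ t : ℝ, Int.fract t ≠ 0 → 0 < x t) ∧
      (∀ t : ℝ, x (t + 1) - x t + a * x (h t) = 0) ∧
      ∃ k : ℕ, M ≤ (2 : ℝ) ^ k ∧ a = (2 : ℝ) ^ k ∧
        (∀ t : ℝ, h t = (⌊t⌋ : ℝ) - (2 : ℝ) ^ (-(k : ℤ) - 2) * (1 - Int.fract t)) ∧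
        (∀ t : ℝ, x t = (2 : ℝ) ^ (-⌊t⌋) * (1 - Int.fract t)) := by
  obtain ⟨k, hk⟩ := pow_unbounded_of_one_lt M (one_lt_two (α := ℝ))
  set ε : ℝ := 2 ^ (-(k : ℤ) - 2)
  have hε : ε ∈ Set.Ioc 0 1 :=
    ⟨zpow_pos two_pos _, zpow_le_one_of_nonpos₀ one_le_two (by omega)⟩
  have ha : (2 : ℝ) ^ k * 2 * ε = 1 - 2⁻¹ := by
    rw [← zpow_natCast, ← zpow_add_one₀ two_ne_zero, ← zpow_add₀ two_ne_zero,
      show (k : ℤ) + 1 + (-k - 2) = -1 by ring]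
    norm_num
  exact ⟨2 ^ k, delayedArg ε, sawtooth 2, hk.le, fun t ↦ delayedArg_lt hε.1 t,
    fun t ↦ (sawtooth_pos two_pos t).le, fun t _ ↦ sawtooth_pos two_pos t,
    sawtooth_solves two_ne_zero hε ha, k, hk.le, rfl, fun _ ↦ rfl, fun _ ↦ rfl⟩

/-- Theorem 1 (first part): for every `M > 0` there exist a constant
coefficient `a ≥ M` and a delayed argument `h(t) < t` such that
`x(t+1) - x(t) + a·x(h(t)) = 0` has a nonnegative solution which is
positive at every non-integer point; concretely `a = 2^k` with `2^k ≥ M`,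
`h(t) = ⌊t⌋ - 2^(-k-2)·(1-{t})`, `x(t) = 2^(-⌊t⌋)·(1-{t})`. -/
theorem stmt_1 (M : ℝ) (hM : 0 < M) :
    ∃ (a : ℝ) (h x : ℝ → ℝ),
      M ≤ a ∧ (∀ t : ℝ, h t < t) ∧
      (∀ t : ℝ, 0 ≤ x t) ∧
      (∀ t : ℝ, Int.fract t ≠ 0 → 0 < x t) ∧
      (∀ t : ℝ, x (t + 1) - x t + a * x (h t) = 0) ∧
      ∃ k : ℕ, M ≤ (2 : ℝ) ^ k ∧ a = (2 : ℝ) ^ k ∧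
        (∀ t : ℝ, h t = (⌊t⌋ : ℝ) - (2 : ℝ) ^ (-(k : ℤ) - 2) * (1 - Int.fract t)) ∧
        (∀ t : ℝ, x t = (2 : ℝ) ^ (-⌊t⌋) * (1 - Int.fract t)) :=
  stmt_1_general M
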